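/- For the cone Ω* = cone(e_i + e_j : 1 ≤ i < j ≤ n) ⊆ Q^n, a point x ∈ Q^n_{≥0} lies in Ω* if and only if x_i ≤ Σ_{j ≠ i} x_j for every i ∈ {1,...,n}. -/

import Mathlib

open Finset

/-- The convex cone generated by a set of vectors: all finite nonnegative
rational linear combinations. -/
def coneOf {m : ℕ} (S : Set (Fin m → ℚ)) : Set (Fin m → ℚ) :=
  {x | ∃ (r : ℕ) (c : Fin r → ℚ) (v : Fin r → Fin m → ℚ),
    (∀ i, 0 ≤ c i) ∧ (∀ i, v i ∈ S) ∧ x = ∑ i, c i • v i}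

/-!
The inequalities `2 * x i ≤ ∑ j, x j` cut out a pointed cone containing every `eᵢ + eⱼ`, which
gives one inclusion. Conversely, if `x ≥ 0` is tight at `m`, then `x = ∑_{j ≠ m} xⱼ (eₘ + eⱼ)`.
Otherwise pick positive coordinates `i ≠ j` and subtract `t (eᵢ + eⱼ)` with `t` as large as
nonnegativity and the inequalities allow: either a coordinate vanishes, and induction on the size
of the support applies, or the remainder is tight.
-/

section PairSum

variable {K ι : Type*} [CommRing K] [DecidableEq ι]

variable (K) in
def pairSum (i j : ι) : ι → K := Pi.single i 1 + Pi.single j 1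

variable (K ι) in
def pairSums : Set (ι → K) := {w | ∃ i j : ι, i ≠ j ∧ w = pairSum K i j}

theorem pairSum_apply {i j : ι} (hij : i ≠ j) (m : ι) :
    pairSum K i j m = if m = i ∨ m = j then 1 else 0 := by
  by_cases hi : m = i
  · subst hi; simp [pairSum, hij]
  · by_cases hj : m = j
    · subst hj; simp [pairSum, hi]
    · simp [pairSum, hi, hj]

theorem sum_pairSum [Fintype ι] (i j : ι) : ∑ m, pairSum K i j m = 2 := by
  simp only [pairSum, Pi.add_apply, sum_add_distrib, Fintype.sum_pi_single', one_add_one_eq_two]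

theorem sum_sub_smul_pairSum [Fintype ι] (x : ι → K) (t : K) (i j : ι) :
    ∑ l, (x - t • pairSum K i j) l = ∑ l, x l - 2 * t := by
  simp only [Pi.sub_apply, Pi.smul_apply, smul_eq_mul, sum_sub_distrib, ← mul_sum, sum_pairSum]
  ring

end PairSum

theorem card_support_lt {ι M : Type*} [Fintype ι] [Zero M] [DecidableEq M] {x y : ι → M}
    (hsupp : ∀ m, x m = 0 → y m = 0) {k : ι} (hxk : x k ≠ 0) (hyk : y k = 0) :
    #{m | y m ≠ 0} < #{m | x m ≠ 0} := by
  refine card_lt_card ⟨fun m hm => ?_, fun h => ?_⟩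
  · simp only [mem_filter, mem_univ, true_and] at hm ⊢
    exact fun hx => hm (hsupp m hx)
  · simpa [hyk] using h (mem_filter.mpr ⟨mem_univ k, hxk⟩)

section Balanced

variable {K ι : Type*} [Field K] [LinearOrder K] [IsStrictOrderedRing K]
  [Fintype ι] [DecidableEq ι]

variable (K ι) in
def balancedCone : PointedCone K (ι → K) where
  carrier := {x | ∀ i, 2 * x i ≤ ∑ j, x j}
  add_mem' {x y} hx hy i := by
    simp only [Set.mem_ofPred_eq, Pi.add_apply, sum_add_distrib] at *
    linarith [hx i, hy i]
  zero_mem' i := by simp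
  smul_mem' c x hx i := by
    simp only [Set.mem_ofPred_eq, Pi.smul_apply, ← Nonneg.coe_smul, smul_eq_mul, ← mul_sum] at *
    nlinarith [hx i, c.2]

theorem pairSums_subset_balancedCone : pairSums K ι ⊆ balancedCone K ι := by
  rintro _ ⟨i, j, hij, rfl⟩ m
  rw [sum_pairSum, pairSum_apply hij]
  split_ifs <;> norm_num

theorem hull_pairSums_le_balancedCone : PointedCone.hull K (pairSums K ι) ≤ balancedCone K ι :=
  Submodule.span_le.mpr pairSums_subset_balancedCone

theorem sum_erase_smul_pairSum_eq {x : ι → K} {m : ι} (hm : 2 * x m = ∑ j, x j) :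
    ∑ j ∈ univ.erase m, x j • pairSum K m j = x := by
  have hrest : ∑ j ∈ univ.erase m, x j = x m := by
    rw [sum_erase_eq_sub (mem_univ m)]; linarith
  ext l
  simp only [pairSum, Finset.sum_apply, Pi.smul_apply, Pi.add_apply, smul_eq_mul, mul_add,
    sum_add_distrib, Pi.single_apply, mul_ite, mul_one, mul_zero]
  by_cases hl : l = m
  · subst hl
    simp [hrest]
  · simp [hl]

theorem mem_hull_pairSums_of_tight {x : ι → K} (hx : 0 ≤ x) {m : ι} (hm : 2 * x m = ∑ j, x j) :
    x ∈ PointedCone.hull K (pairSums K ι) := by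
  rw [← sum_erase_smul_pairSum_eq hm]
  refine Submodule.sum_mem _ fun j hj => PointedCone.smul_mem _ (hx j) ?_
  exact PointedCone.subset_hull ⟨m, j, (ne_of_mem_erase hj).symm, rfl⟩

theorem sub_smul_pairSum_mem_balancedCone {x : ι → K} (hx : x ∈ balancedCone K ι) {i j : ι}
    (hij : i ≠ j) {t : K} (ht : ∀ m, m ≠ i → m ≠ j → 2 * t ≤ ∑ l, x l - 2 * x m) :
    x - t • pairSum K i j ∈ balancedCone K ι := by
  intro m
  rw [sum_sub_smul_pairSum, Pi.sub_apply, Pi.smul_apply, smul_eq_mul, pairSum_apply hij]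
  split_ifs with h
  · linarith [hx m]
  · rw [not_or] at h
    linarith [ht m h.1 h.2]

theorem exists_pairSum_step {x : ι → K} (hstrict : ∀ m, 2 * x m < ∑ l, x l) {i j : ι}
    (hij : i ≠ j) (hi : 0 < x i) (hj : 0 < x j) :
    ∃ t, 0 < t ∧ t ≤ x i ∧ t ≤ x j ∧ (∀ m, m ≠ i → m ≠ j → 2 * t ≤ ∑ l, x l - 2 * x m) ∧
      (t = x i ∨ t = x j ∨ ∃ m, m ≠ i ∧ m ≠ j ∧ 2 * t = ∑ l, x l - 2 * x m) := by
  -- `g m` is the largest step allowed by nonnegativity at `i`, `j` and by the balance at `m`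
  let g : ι → K := fun m => if m = i then x i else if m = j then x j else (∑ l, x l - 2 * x m) / 2
  obtain ⟨m₀, -, hm₀⟩ := exists_min_image univ g ⟨i, mem_univ i⟩
  refine ⟨g m₀, ?_, by simpa [g] using hm₀ i (mem_univ i),
    by simpa [g, hij.symm] using hm₀ j (mem_univ j), fun m hmi hmj => ?_, ?_⟩
  · simp only [g]
    split_ifs
    · exact hi
    · exact hj
    · linarith [hstrict m₀]
  · have := hm₀ m (mem_univ m)
    simp only [g, hmi, hmj, if_false] at this
    linarith
  · by_cases hm₀i : m₀ = i
    · simp [g, hm₀i]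
    by_cases hm₀j : m₀ = j
    · simp [g, hm₀j, hij.symm]
    · exact Or.inr (Or.inr ⟨m₀, hm₀i, hm₀j, by simp only [g, hm₀i, hm₀j, if_false]; ring⟩)

theorem exists_eq_add_smul_pairSum {x : ι → K} (hx : 0 ≤ x) (hb : x ∈ balancedCone K ι)
    (hstrict : ∀ m, 2 * x m < ∑ l, x l) {i j : ι} (hij : i ≠ j) (hi : 0 < x i) (hj : 0 < x j) :
    ∃ (t : K) (y : ι → K), 0 < t ∧ x = y + t • pairSum K i j ∧ 0 ≤ y ∧ y ∈ balancedCone K ι ∧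
      ((∃ m, 2 * y m = ∑ l, y l) ∨ #{m | y m ≠ 0} < #{m | x m ≠ 0}) := by
  obtain ⟨t, ht, hti, htj, htm, hstop⟩ := exists_pairSum_step hstrict hij hi hj
  set y := x - t • pairSum K i j with hy
  have hy_apply : ∀ m, y m = x m - t * if m = i ∨ m = j then 1 else 0 := fun m => by
    rw [hy, Pi.sub_apply, Pi.smul_apply, smul_eq_mul, pairSum_apply hij]
  have hy_nonneg : 0 ≤ y := fun m => by
    rw [Pi.zero_apply, hy_apply]
    split_ifs with h
    · rcases h with rfl | rfl <;> linarith
    · simpa using hx m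
  have hsupp : ∀ m, x m = 0 → y m = 0 := fun m hm => by
    have hmi : m ≠ i := by rintro rfl; linarith
    have hmj : m ≠ j := by rintro rfl; linarith
    simp [hy_apply, hm, hmi, hmj]
  refine ⟨t, y, ht, by rw [hy, sub_add_cancel], hy_nonneg,
    sub_smul_pairSum_mem_balancedCone hb hij htm, ?_⟩
  rcases hstop with rfl | rfl | ⟨m, hmi, hmj, hm⟩
  · exact Or.inr (card_support_lt hsupp hi.ne' (by simp [hy_apply]))
  · exact Or.inr (card_support_lt hsupp hj.ne' (by simp [hy_apply]))
  · refine Or.inl ⟨m, ?_⟩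
    rw [hy, sum_sub_smul_pairSum, ← hy, hy_apply]
    simp only [hmi, hmj, or_self, if_false, mul_zero, sub_zero]
    linarith

theorem mem_hull_pairSums_of_nonneg {x : ι → K} (hx : 0 ≤ x) (hb : x ∈ balancedCone K ι) :
    x ∈ PointedCone.hull K (pairSums K ι) := by
  induction hk : #{m | x m ≠ 0} using Nat.strong_induction_on generalizing x with
  | _ k ih =>
  by_cases htight : ∃ m, 2 * x m = ∑ l, x l
  · obtain ⟨m, hm⟩ := htight
    exact mem_hull_pairSums_of_tight hx hm
  have hstrict : ∀ m, 2 * x m < ∑ l, x l := fun m => (hb m).lt_of_ne fun h => htight ⟨m, h⟩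
  obtain rfl | ⟨i, hi⟩ := eq_or_ne x 0 |>.imp id Function.ne_iff.mp
  · exact zero_mem _
  have hi : 0 < x i := (hx i).lt_of_ne' hi
  obtain ⟨j, hj, hxj⟩ : ∃ j ∈ univ.erase i, 0 < x j := by
    refine exists_lt_of_sum_lt (f := 0) ?_
    rw [sum_erase_eq_sub (mem_univ i)]
    simpa using (by linarith [hstrict i] : 0 < ∑ l, x l - x i)
  have hij : i ≠ j := (ne_of_mem_erase hj).symm
  obtain ⟨t, y, ht, rfl, hy, hyb, hy_tight_or_lt⟩ :=
    exists_eq_add_smul_pairSum hx hb hstrict hij hi hxj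
  refine add_mem ?_ (PointedCone.smul_mem _ ht.le (PointedCone.subset_hull ⟨i, j, hij, rfl⟩))
  rcases hy_tight_or_lt with ⟨m, hm⟩ | hlt
  · exact mem_hull_pairSums_of_tight hy hm
  · exact ih _ (hk ▸ hlt) hy hyb rfl

end Balanced

theorem coneOf_eq_hull {m : ℕ} (S : Set (Fin m → ℚ)) : coneOf S = PointedCone.hull ℚ S := by
  ext x
  rw [SetLike.mem_coe, Submodule.mem_span_set']
  constructor
  · rintro ⟨r, c, v, hc, hv, rfl⟩
    exact ⟨r, fun i => ⟨c i, hc i⟩, fun i => ⟨v i, hv i⟩, rfl⟩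
  · rintro ⟨r, c, v, rfl⟩
    exact ⟨r, fun i => c i, fun i => v i, fun i => (c i).2, fun i => (v i).2, rfl⟩

theorem stmt_9_general (n : ℕ) (x : Fin n → ℚ) (hx : ∀ i, 0 ≤ x i) :
    x ∈ coneOf {w | ∃ i j : Fin n, i ≠ j ∧
        w = Pi.single i (1 : ℚ) + Pi.single j (1 : ℚ)}
    ↔ ∀ i : Fin n, x i ≤ ∑ j ∈ univ.erase i, x j := by
  have hbalanced : ∀ i, x i ≤ ∑ j ∈ univ.erase i, x j ↔ 2 * x i ≤ ∑ j, x j := fun i => by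
    rw [sum_erase_eq_sub (mem_univ i)]
    constructor <;> intro h <;> linarith
  rw [coneOf_eq_hull]
  simp only [hbalanced]
  exact ⟨fun h => hull_pairSums_le_balancedCone h, mem_hull_pairSums_of_nonneg hx⟩

/-- A point `x` of the nonnegative orthant of `ℚⁿ` lies in
`Ω* = cone(eᵢ + eⱼ : i ≠ j)` if and only if `xᵢ ≤ Σ_{j ≠ i} xⱼ` for every `i`. -/
theorem stmt_9 (n : ℕ) (hn : 2 ≤ n) (x : Fin n → ℚ) (hx : ∀ i, 0 ≤ x i) :
    x ∈ coneOf {w | ∃ i j : Fin n, i ≠ j ∧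
        w = Pi.single i (1 : ℚ) + Pi.single j (1 : ℚ)}
    ↔ ∀ i : Fin n, x i ≤ ∑ j ∈ univ.erase i, x j :=
  stmt_9_general n x hx
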